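/- First time derivative of the switching function: let f_0,…,f_m : ℝ^n×ℝ^l → ℝ^n be C¹ and set f(x,u,v):=f_0(x,u)+Σ_{i=1}^m v_i f_i(x,u). Let x:[0,T]→ℝ^n, u:[0,T]→ℝ^l, p:[0,T]→ℝ^{n,*}, v:[0,T]→ℝ^m, and let t be a point at which x, u and p are differentiable with ẋ(t)=f(x(t),u(t),v(t)) and ṗ(t)=−p(t)·D_xf(x(t),u(t),v(t)). Fix j∈{1,…,m} and assume p(t)·D_uf_j(x(t),u(t)) = 0 and p(t)·[f_i,f_j](x(t),u(t)) = 0 for all i=1,…,m. Then s↦p(s)·f_j(x(s),u(s)) is differentiable at t with derivative equal to p(t)·[f_0,f_j](x(t),u(t)). -/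

import Mathlib

/-!
Along the extremal, `ẋ = f(x,u)` and `ṗ = -p·D_x f(x,u)`, so the product and chain rules give, for
any `C¹` field `g`, `d/dt (p·g(x,u)) = p·[f,g](x,u) + p·D_u g(x,u)·u̇`. For `g = f_j` the control
term vanishes because `p·D_u f_j = 0`, and the bracket is affine in its first argument,
`[f,f_j] = [f₀,f_j] + Σ vᵢ [fᵢ,f_j]`, where every `p·[fᵢ,f_j]` vanishes by the Goh conditions.
-/

open Set Matrix

noncomputable section

def lieBracket {n l : ℕ}
    (g h : (Fin n → ℝ) → (Fin l → ℝ) → (Fin n → ℝ))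
    (x : Fin n → ℝ) (u : Fin l → ℝ) : Fin n → ℝ :=
  (fderiv ℝ (fun y => h y u) x) (g x u) - (fderiv ℝ (fun y => g y u) x) (h x u)

theorem HasDerivAt.dotProduct {𝕜 ι : Type*} [NontriviallyNormedField 𝕜] [Fintype ι]
    {p q : 𝕜 → ι → 𝕜} {p' q' : ι → 𝕜} {t : 𝕜}
    (hp : HasDerivAt p p' t) (hq : HasDerivAt q q' t) :
    HasDerivAt (fun s => p s ⬝ᵥ q s) (p' ⬝ᵥ q t + p t ⬝ᵥ q') t := by
  have h := HasDerivAt.fun_sum (u := .univ) fun k _ =>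
    (hasDerivAt_pi.1 hp k).fun_mul (hasDerivAt_pi.1 hq k)
  rwa [Finset.sum_add_distrib] at h

-- The adjoint equation gives the row vector `w·L` through its coordinates `w·L eₖ`.
theorem covector_dotProduct {R ι κ : Type*} [CommSemiring R] [Fintype ι] [Fintype κ]
    [DecidableEq ι] (w : κ → R) (L : (ι → R) →ₗ[R] κ → R) (q : ι → R) :
    (fun k => w ⬝ᵥ L (Pi.single k 1)) ⬝ᵥ q = w ⬝ᵥ L q := by
  have hq : ∀ k, Pi.single k (q k) = q k • Pi.single k (1 : R) := fun k => by
    rw [← Pi.single_smul, smul_eq_mul, mul_one]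
  conv_rhs => rw [← Finset.univ_sum_single q]
  simp only [hq, map_sum, map_smul, dotProduct_sum, dotProduct_smul, smul_eq_mul]
  simp only [dotProduct, mul_comm]

section Partial

variable {𝕜 E F G : Type*} [NontriviallyNormedField 𝕜]
  [NormedAddCommGroup E] [NormedSpace 𝕜 E] [NormedAddCommGroup F] [NormedSpace 𝕜 F]
  [NormedAddCommGroup G] [NormedSpace 𝕜 G] {f : E → F → G} {a : E} {b : F}

theorem DifferentiableAt.uncurry_left
    (hf : DifferentiableAt 𝕜 (fun z : E × F => f z.1 z.2) (a, b)) :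
    DifferentiableAt 𝕜 (fun y => f y b) a :=
  hf.comp (f := fun y => (y, b)) a (differentiableAt_id.prodMk (differentiableAt_const b))

theorem DifferentiableAt.uncurry_right
    (hf : DifferentiableAt 𝕜 (fun z : E × F => f z.1 z.2) (a, b)) :
    DifferentiableAt 𝕜 (fun w => f a w) b :=
  hf.comp (f := fun w => (a, w)) b ((differentiableAt_const a).prodMk differentiableAt_id)

theorem fderiv_uncurry_left
    (hf : DifferentiableAt 𝕜 (fun z : E × F => f z.1 z.2) (a, b)) :
    fderiv 𝕜 (fun y => f y b) a =
      (fderiv 𝕜 (fun z : E × F => f z.1 z.2) (a, b)).comp (.inl 𝕜 E F) :=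
  (hf.hasFDerivAt.comp (f := fun y => (y, b)) a (hasFDerivAt_prodMk_left a b)).fderiv

theorem fderiv_uncurry_right
    (hf : DifferentiableAt 𝕜 (fun z : E × F => f z.1 z.2) (a, b)) :
    fderiv 𝕜 (fun w => f a w) b =
      (fderiv 𝕜 (fun z : E × F => f z.1 z.2) (a, b)).comp (.inr 𝕜 E F) :=
  (hf.hasFDerivAt.comp (f := fun w => (a, w)) b (hasFDerivAt_prodMk_right a b)).fderiv

theorem HasDerivAt.uncurry_comp {x : 𝕜 → E} {u : 𝕜 → F} {x' : E} {u' : F} {t : 𝕜}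
    (hx : HasDerivAt x x' t) (hu : HasDerivAt u u' t)
    (hf : DifferentiableAt 𝕜 (fun z : E × F => f z.1 z.2) (x t, u t)) :
    HasDerivAt (fun s => f (x s) (u s))
      (fderiv 𝕜 (fun y => f y (u t)) (x t) x' + fderiv 𝕜 (fun w => f (x t) w) (u t) u') t := by
  rw [fderiv_uncurry_left hf, fderiv_uncurry_right hf, ContinuousLinearMap.comp_apply,
    ContinuousLinearMap.comp_apply, ← map_add, ContinuousLinearMap.inl_apply,
    ContinuousLinearMap.inr_apply, Prod.mk_add_mk, add_zero, zero_add]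
  exact hf.hasFDerivAt.comp_hasDerivAt t (hx.prodMk hu)

end Partial

theorem dotProduct_fderiv_apply {E ι : Type*} [NormedAddCommGroup E] [NormedSpace ℝ E]
    [Fintype ι] {g : E → ι → ℝ} {b : E} (hg : DifferentiableAt ℝ g b) (c : ι → ℝ) (w : E) :
    c ⬝ᵥ fderiv ℝ g b w = fderiv ℝ (fun y => c ⬝ᵥ g y) b w := by
  let φ : (ι → ℝ) →L[ℝ] ℝ := LinearMap.toContinuousLinearMap (dotProductBilin ℝ ℝ c)
  rw [HasFDerivAt.fderiv (f := fun y => c ⬝ᵥ g y) (φ.hasFDerivAt.comp b hg.hasFDerivAt)]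
  rfl

theorem hasDerivAt_dotProduct_comp_of_adjoint {n l : ℕ}
    {f g : (Fin n → ℝ) → (Fin l → ℝ) → Fin n → ℝ}
    {x : ℝ → Fin n → ℝ} {u : ℝ → Fin l → ℝ} {p : ℝ → Fin n → ℝ} {u' : Fin l → ℝ} {t : ℝ}
    (hx : HasDerivAt x (f (x t) (u t)) t) (hu : HasDerivAt u u' t)
    (hp : HasDerivAt p
      (fun k => -(p t ⬝ᵥ fderiv ℝ (fun y => f y (u t)) (x t) (Pi.single k 1))) t)
    (hg : DifferentiableAt ℝ (fun z : (Fin n → ℝ) × (Fin l → ℝ) => g z.1 z.2) (x t, u t)) :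
    HasDerivAt (fun s => p s ⬝ᵥ g (x s) (u s))
      (p t ⬝ᵥ lieBracket f g (x t) (u t) +
        p t ⬝ᵥ fderiv ℝ (fun w => g (x t) w) (u t) u') t := by
  refine (hp.dotProduct (hx.uncurry_comp hu hg)).congr_deriv ?_
  set L := fderiv ℝ (fun y => f y (u t)) (x t)
  have hcov : (fun k => -(p t ⬝ᵥ L (Pi.single k 1))) ⬝ᵥ g (x t) (u t) =
      -(p t ⬝ᵥ L (g (x t) (u t))) := by
    rw [show (fun k => -(p t ⬝ᵥ L (Pi.single k 1))) = -fun k => p t ⬝ᵥ L (Pi.single k 1) from rfl,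
      neg_dotProduct]
    exact congrArg Neg.neg (covector_dotProduct (p t) (L : (Fin n → ℝ) →ₗ[ℝ] Fin n → ℝ) _)
  rw [hcov, lieBracket, dotProduct_add, dotProduct_sub]
  ring

theorem lieBracket_add_sum_smul_left {n l m : ℕ}
    {f₀ g : (Fin n → ℝ) → (Fin l → ℝ) → Fin n → ℝ}
    {f : Fin m → (Fin n → ℝ) → (Fin l → ℝ) → Fin n → ℝ}
    (c : Fin m → ℝ) {a : Fin n → ℝ} {b : Fin l → ℝ}
    (hf₀ : DifferentiableAt ℝ (fun y => f₀ y b) a)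
    (hf : ∀ i, DifferentiableAt ℝ (fun y => f i y b) a) :
    lieBracket (fun y w => f₀ y w + ∑ i, c i • f i y w) g a b =
      lieBracket f₀ g a b + ∑ i, c i • lieBracket (f i) g a b := by
  simp only [lieBracket]
  have hsum : DifferentiableAt ℝ (fun y => ∑ i, c i • f i y b) a :=
    DifferentiableAt.fun_sum (A := fun i y => c i • f i y b) fun i _ => (hf i).const_smul (c i)
  rw [fderiv_fun_add hf₀ hsum,
    fderiv_fun_sum (A := fun i y => c i • f i y b) fun i _ => (hf i).const_smul (c i)]
  simp only [map_add, map_sum, map_smul, fderiv_fun_const_smul (hf _), _root_.add_apply,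
    _root_.sum_apply, _root_.smul_apply, smul_sub, Finset.sum_sub_distrib]
  abel

theorem deriv_switching_function_general
    (n l m : ℕ)
    (f0 : (Fin n → ℝ) → (Fin l → ℝ) → (Fin n → ℝ))
    (fi : Fin m → (Fin n → ℝ) → (Fin l → ℝ) → (Fin n → ℝ))
    (hf0 : ContDiff ℝ 1 (fun z : (Fin n → ℝ) × (Fin l → ℝ) => f0 z.1 z.2))
    (hfi : ∀ i, ContDiff ℝ 1 (fun z : (Fin n → ℝ) × (Fin l → ℝ) => fi i z.1 z.2))
    (x : ℝ → Fin n → ℝ) (u : ℝ → Fin l → ℝ) (p : ℝ → Fin n → ℝ) (v : ℝ → Fin m → ℝ)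
    (t : ℝ) (u' : Fin l → ℝ)
    (hx : HasDerivAt x (f0 (x t) (u t) + ∑ i, v t i • fi i (x t) (u t)) t)
    (hu : HasDerivAt u u' t)
    (hp : HasDerivAt p
      (fun j => -(p t ⬝ᵥ (fderiv ℝ
        (fun y => f0 y (u t) + ∑ i, v t i • fi i y (u t)) (x t)) (Pi.single j 1))) t)
    (j : Fin m)
    (hHvu : fderiv ℝ (fun w => p t ⬝ᵥ fi j (x t) w) (u t) = 0)
    (hGoh : ∀ i : Fin m, p t ⬝ᵥ lieBracket (fi i) (fi j) (x t) (u t) = 0) :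
    HasDerivAt (fun s => p s ⬝ᵥ fi j (x s) (u s))
      (p t ⬝ᵥ lieBracket f0 (fi j) (x t) (u t)) t := by
  have hf0' := hf0.differentiable one_ne_zero (x t, u t)
  have hfi' i := (hfi i).differentiable one_ne_zero (x t, u t)
  have h := hasDerivAt_dotProduct_comp_of_adjoint
    (f := fun y w => f0 y w + ∑ i, v t i • fi i y w) hx hu hp (hfi' j)
  rw [lieBracket_add_sum_smul_left (v t) hf0'.uncurry_left fun i => (hfi' i).uncurry_left,
    dotProduct_fderiv_apply (hfi' j).uncurry_right, hHvu] at h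
  simpa only [dotProduct_add, dotProduct_sum, dotProduct_smul, hGoh, smul_eq_mul, mul_zero,
    Finset.sum_const_zero, add_zero, _root_.zero_apply] using h

/-- First time derivative of the switching function `H_{v_j} = p·f_j`:
under `H_{v_j u} = 0` and the Goh conditions, `(d/dt)(p·f_j) = p·[f₀,f_j]`. -/
theorem deriv_switching_function
    (n l m : ℕ) (T : ℝ)
    (f0 : (Fin n → ℝ) → (Fin l → ℝ) → (Fin n → ℝ))
    (fi : Fin m → (Fin n → ℝ) → (Fin l → ℝ) → (Fin n → ℝ))
    (hf0 : ContDiff ℝ 1 (fun z : (Fin n → ℝ) × (Fin l → ℝ) => f0 z.1 z.2))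
    (hfi : ∀ i, ContDiff ℝ 1 (fun z : (Fin n → ℝ) × (Fin l → ℝ) => fi i z.1 z.2))
    (x : ℝ → Fin n → ℝ) (u : ℝ → Fin l → ℝ) (p : ℝ → Fin n → ℝ) (v : ℝ → Fin m → ℝ)
    (t : ℝ) (ht : t ∈ Icc (0:ℝ) T) (u' : Fin l → ℝ)
    (hx : HasDerivAt x (f0 (x t) (u t) + ∑ i, v t i • fi i (x t) (u t)) t)
    (hu : HasDerivAt u u' t)
    (hp : HasDerivAt p
      (fun j => -(p t ⬝ᵥ (fderiv ℝ
        (fun y => f0 y (u t) + ∑ i, v t i • fi i y (u t)) (x t)) (Pi.single j 1))) t)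
    (j : Fin m)
    (hHvu : fderiv ℝ (fun w => p t ⬝ᵥ fi j (x t) w) (u t) = 0)
    (hGoh : ∀ i : Fin m, p t ⬝ᵥ lieBracket (fi i) (fi j) (x t) (u t) = 0) :
    HasDerivAt (fun s => p s ⬝ᵥ fi j (x s) (u s))
      (p t ⬝ᵥ lieBracket f0 (fi j) (x t) (u t)) t :=
  deriv_switching_function_general n l m f0 fi hf0 hfi x u p v t u' hx hu hp j hHvu hGoh
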